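/- arXiv:2409.19605 — 6 statements merged into one kernel-verified Lean document; each statement's English description precedes it below -/
import Mathlib

section
/- (Theorem 1, upper bound for exact DPO-Unif.) Suppose θ^(0) = 0 and the parameters evolve by the exact DPO-Unif update with learning rate η = 1/(β²A): θ^(t+1)_a = θ^(t)_a + (4/(βA)) Σ_{a'∈𝒴} Δ(a,a';θ^(t)) for every a ∈ 𝒴. Then for every number of iterations T ∈ ℕ and all a, a' ∈ 𝒴, |δ(a,a';θ^(T))| ≤ 0.588^T. -/
/-- The sigmoid function. -/
noncomputable def sig (x : ℝ) : ℝ := 1 / (1 + Real.exp (-x))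

/-!
Write `g_a = r(a) - β θ_a`, so that `δ(a,a') = g_a - g_{a'}`. By the mean value theorem each term
`Δ(a,a')` equals `c_{aa'} (g_a - g_{a'})` with `c_{aa'}` a value of `σ'` between the two arguments,
and as long as `|δ| ≤ 1` both arguments lie in `[-2, 2]`, so `σ'(2) ≤ c_{aa'} ≤ 1/4`. The update then
reads `g ↦ (I - (4/A) L) g` for the Laplacian `L` of the weights `c`, and `I - (4/A) L` is a stochastic
matrix all of whose entries are at least `4σ'(2)/A`. Averaging with such a matrix shrinks every
difference `g_a - g_{a'}` by the factor `1 - 4σ'(2) ≤ 0.588`.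
-/

open Finset Real

theorem sig_eq_sigmoid : sig = sigmoid := by
  funext x
  rw [sig, sigmoid_def, one_div]

theorem sigmoid_mul_one_sub_sigmoid_le (x : ℝ) : sigmoid x * (1 - sigmoid x) ≤ 1 / 4 := by
  nlinarith [sq_nonneg (sigmoid x - 1 / 2)]

/-- `σ (1 - σ) = 1/4 - (σ - 1/2)^2` and `σ(-R) = 1 - σ(R)`. -/
theorem sigmoid_mul_one_sub_sigmoid_le_of_abs_le {x R : ℝ} (hx : |x| ≤ R) :
    sigmoid R * (1 - sigmoid R) ≤ sigmoid x * (1 - sigmoid x) := by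
  obtain ⟨hlo, hhi⟩ := abs_le.1 hx
  have hlo' : 1 - sigmoid R ≤ sigmoid x := by
    rw [← sigmoid_neg]
    exact sigmoid_le hlo
  have hhi' : sigmoid x ≤ sigmoid R := sigmoid_le hhi
  nlinarith

theorem exp_two_lt : exp 2 < 7.5 := by
  have h : exp 2 = exp 1 * exp 1 := by rw [← exp_add]; norm_num
  nlinarith [exp_one_lt_d9, exp_pos 1]

theorem sigmoid_two_mul_one_sub_sigmoid_two_ge : (0.103 : ℝ) ≤ sigmoid 2 * (1 - sigmoid 2) := by
  have h := exp_two_lt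
  have hpos := exp_pos 2
  have hσ : sigmoid 2 = exp 2 / (1 + exp 2) := by
    rw [sigmoid_def, exp_neg]
    field_simp
    ring
  rw [hσ, div_mul_eq_mul_div, le_div_iff₀ (by positivity)]
  field_simp
  nlinarith [one_lt_exp_iff.2 (by norm_num : (0 : ℝ) < 2)]

theorem exists_sigmoid_sub_eq_mul {x y R : ℝ} (hx : |x| ≤ R) (hy : |y| ≤ R) :
    ∃ c, sigmoid R * (1 - sigmoid R) ≤ c ∧ c ≤ 1 / 4 ∧ sigmoid x - sigmoid y = c * (x - y) := by
  wlog hyx : y ≤ x generalizing x y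
  · obtain ⟨c, hcR, hc4, hc⟩ := this hy hx (le_of_not_ge hyx)
    exact ⟨c, hcR, hc4, by linarith⟩
  rcases hyx.eq_or_lt with rfl | hlt
  · exact ⟨1 / 4, sigmoid_mul_one_sub_sigmoid_le R, le_rfl, by ring⟩
  obtain ⟨c, ⟨hyc, hcx⟩, hc⟩ := exists_hasDerivAt_eq_slope sigmoid _ hlt
    continuous_sigmoid.continuousOn (fun z _ => hasDerivAt_sigmoid z)
  have hcR : |c| ≤ R := abs_le.2 ⟨by linarith [(abs_le.1 hy).1], by linarith [(abs_le.1 hx).2]⟩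
  refine ⟨_, sigmoid_mul_one_sub_sigmoid_le_of_abs_le hcR, sigmoid_mul_one_sub_sigmoid_le c, ?_⟩
  rw [hc, div_mul_cancel₀ _ (sub_ne_zero.2 hlt.ne')]

/-- Two averages of `g` whose weights are all at least `m` overlap in mass at least `card ι * m`,
so they differ by at most the remaining mass times the oscillation of `g`. -/
theorem sum_mul_sub_sum_mul_le {ι : Type*} [Fintype ι] [Nonempty ι] {w w' g : ι → ℝ} {m D : ℝ}
    (hw : ∑ b, w b = 1) (hw' : ∑ b, w' b = 1) (hm : ∀ b, m ≤ w b) (hm' : ∀ b, m ≤ w' b)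
    (hD : ∀ b b', g b - g b' ≤ D) :
    ∑ b, w b * g b - ∑ b, w' b * g b ≤ (1 - Fintype.card ι * m) * D := by
  set u : ι → ℝ := fun b => min (w b) (w' b)
  set U := ∑ b, u b
  obtain ⟨bM, -, hbM⟩ := exists_max_image univ g univ_nonempty
  obtain ⟨bm, -, hbm⟩ := exists_min_image univ g univ_nonempty
  have hU1 : U ≤ 1 := hw ▸ sum_le_sum fun b _ => min_le_left _ _
  have hmU : Fintype.card ι * m ≤ U := by
    simpa using sum_le_sum fun b (_ : b ∈ univ) => le_min (hm b) (hm' b)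
  have hup : ∑ b, (w b - u b) * g b ≤ (1 - U) * g bM := by
    rw [← hw, ← sum_sub_distrib, sum_mul]
    exact sum_le_sum fun b _ =>
      mul_le_mul_of_nonneg_left (hbM b (mem_univ b)) (sub_nonneg.2 (min_le_left _ _))
  have hdown : (1 - U) * g bm ≤ ∑ b, (w' b - u b) * g b := by
    rw [← hw', ← sum_sub_distrib, sum_mul]
    exact sum_le_sum fun b _ =>
      mul_le_mul_of_nonneg_left (hbm b (mem_univ b)) (sub_nonneg.2 (min_le_right _ _))
  have hsplit : ∑ b, w b * g b - ∑ b, w' b * g b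
      = ∑ b, (w b - u b) * g b - ∑ b, (w' b - u b) * g b := by
    simp only [sub_mul, sum_sub_distrib]
    ring
  calc ∑ b, w b * g b - ∑ b, w' b * g b ≤ (1 - U) * (g bM - g bm) := by nlinarith
    _ ≤ (1 - Fintype.card ι * m) * D :=
      mul_le_mul (by linarith) (hD bM bm) (sub_nonneg.2 (hbm bM (mem_univ bM))) (by linarith)

section ConsensusStep

variable {ι : Type*} [Fintype ι] [DecidableEq ι]

/-- The row `p` of the matrix `I - κ L`, where `L` is the Laplacian of the weights `c`. -/
def consensusWeight (κ : ℝ) (c : ι → ι → ℝ) (p b : ι) : ℝ :=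
  κ * c p b + if b = p then 1 - κ * ∑ b', c p b' else 0

theorem sum_consensusWeight (κ : ℝ) (c : ι → ι → ℝ) (p : ι) :
    ∑ b, consensusWeight κ c p b = 1 := by
  simp only [consensusWeight, sum_add_distrib, sum_ite_eq', mem_univ, if_true, ← mul_sum]
  ring

theorem sum_consensusWeight_mul (κ : ℝ) (c : ι → ι → ℝ) (g : ι → ℝ) (p : ι) :
    ∑ b, consensusWeight κ c p b * g b = g p - κ * ∑ b, c p b * (g p - g b) := by
  simp only [consensusWeight, add_mul, ite_mul, zero_mul, sum_add_distrib, sum_ite_eq', mem_univ,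
    if_true, mul_sub, sum_sub_distrib, ← sum_mul, ← mul_sum, mul_assoc]
  ring

theorem le_consensusWeight {κ m M : ℝ} {c : ι → ι → ℝ} (hκ : 0 ≤ κ) (hm : ∀ p b, m ≤ c p b)
    (hM : ∀ p b, c p b ≤ M) (hκM : κ * ((Fintype.card ι - 1) * M + m) ≤ 1) (p b : ι) :
    κ * m ≤ consensusWeight κ c p b := by
  unfold consensusWeight
  split_ifs with hbp
  · subst hbp
    have hrest : ∑ b' ∈ univ.erase b, c b b' ≤ (Fintype.card ι - 1) * M := by
      calc ∑ b' ∈ univ.erase b, c b b' ≤ (univ.erase b).card • M :=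
            sum_le_card_nsmul _ _ _ fun b' _ => hM b b'
        _ = (Fintype.card ι - 1) * M := by
          rw [card_erase_of_mem (mem_univ b), card_univ, nsmul_eq_mul,
            Nat.cast_sub (Fintype.card_pos_iff.2 ⟨b⟩), Nat.cast_one]
    rw [← add_sum_erase _ _ (mem_univ b)]
    nlinarith
  · linarith [mul_le_mul_of_nonneg_left (hm p b) hκ]

/-- `hκM` keeps the diagonal of `I - κ L` at least `κ m`. -/
theorem abs_consensusStep_sub_le [Nonempty ι] {κ m M D : ℝ} {c : ι → ι → ℝ} {g : ι → ℝ}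
    (hκ : 0 ≤ κ) (hm : ∀ p b, m ≤ c p b) (hM : ∀ p b, c p b ≤ M)
    (hκM : κ * ((Fintype.card ι - 1) * M + m) ≤ 1) (hD : ∀ b b', |g b - g b'| ≤ D) (p q : ι) :
    |(g p - κ * ∑ b, c p b * (g p - g b)) - (g q - κ * ∑ b, c q b * (g q - g b))|
      ≤ (1 - Fintype.card ι * (κ * m)) * D := by
  have hD' : ∀ b b', g b - g b' ≤ D := fun b b' => le_of_abs_le (hD b b')
  have hw := le_consensusWeight hκ hm hM hκM
  simp only [← sum_consensusWeight_mul κ c g]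
  rw [abs_sub_le_iff]
  exact ⟨sum_mul_sub_sum_mul_le (sum_consensusWeight κ c p) (sum_consensusWeight κ c q)
      (hw p) (hw q) hD',
    sum_mul_sub_sum_mul_le (sum_consensusWeight κ c q) (sum_consensusWeight κ c p)
      (hw q) (hw p) hD'⟩

end ConsensusStep

theorem abs_dpoUnif_gap_succ_le {Y : Type*} [Fintype Y] [Nonempty Y] {r : Y → ℝ}
    (hr : ∀ a a', |r a - r a'| ≤ 1) {β D : ℝ} (hβ : β ≠ 0) {θ θ' : Y → ℝ}
    (hθ' : ∀ a, θ' a = θ a +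
      (4 / (β * Fintype.card Y)) * ∑ a', (sig (r a - r a') - sig (β * (θ a - θ a'))))
    (hD1 : D ≤ 1) (hD : ∀ a a', |r a - r a' - β * (θ a - θ a')| ≤ D) (a a' : Y) :
    |r a - r a' - β * (θ' a - θ' a')| ≤ 0.588 * D := by
  classical
  set g : Y → ℝ := fun b => r b - β * θ b
  have hDg : ∀ b b', |g b - g b'| ≤ D := fun b b' => by
    simpa only [g, sub_sub_sub_comm, mul_sub] using hD b b'
  have hslope : ∀ b b', ∃ c, sigmoid 2 * (1 - sigmoid 2) ≤ c ∧ c ≤ 1 / 4 ∧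
      sig (r b - r b') - sig (β * (θ b - θ b')) = c * (g b - g b') := fun b b' => by
    have hx : |r b - r b'| ≤ 2 := (hr b b').trans (by norm_num)
    have hy : |β * (θ b - θ b')| ≤ 2 :=
      calc |β * (θ b - θ b')| = |(r b - r b') - (r b - r b' - β * (θ b - θ b'))| := by
            rw [sub_sub_cancel]
        _ ≤ |r b - r b'| + |r b - r b' - β * (θ b - θ b')| := abs_sub _ _
        _ ≤ 2 := by linarith [hr b b', hD b b']
    obtain ⟨c, hcR, hc4, hc⟩ := exists_sigmoid_sub_eq_mul hx hy
    exact ⟨c, hcR, hc4, by rw [sig_eq_sigmoid, hc]; ring⟩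
  choose c hcm hcM hc using hslope
  have hn : (0 : ℝ) < Fintype.card Y := by exact_mod_cast Fintype.card_pos
  have hstep : ∀ b, r b - β * θ' b = g b - 4 / Fintype.card Y * ∑ b', c b b' * (g b - g b') := by
    intro b
    simp only [hθ', ← hc, g]
    field_simp
    ring
  have hL := sigmoid_two_mul_one_sub_sigmoid_two_ge
  have hL4 := sigmoid_mul_one_sub_sigmoid_le 2
  calc |r a - r a' - β * (θ' a - θ' a')|
      = |(r a - β * θ' a) - (r a' - β * θ' a')| := by ring_nf
    _ ≤ (1 - Fintype.card Y * (4 / Fintype.card Y * (sigmoid 2 * (1 - sigmoid 2)))) * D := by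
      rw [hstep, hstep]
      refine abs_consensusStep_sub_le (by positivity) hcm hcM ?_ hDg a a'
      rw [div_mul_eq_mul_div, div_le_one hn]
      linarith
    _ ≤ 0.588 * D := by
      have hD0 : 0 ≤ D := (abs_nonneg _).trans (hD a a)
      rw [← mul_assoc, mul_div_cancel₀ _ hn.ne']
      nlinarith

/-- **Theorem 1 (Upper bound of DPO-Unif).**
Under tabular softmax parametrization with uniform reference policy,
rewards in `[0,1]`, initialization `θ⁰ = 0`, and the exact DPO-Unif
gradient update with learning rate `η = 1/(β²A)`, the reward-gap errors
`δ(a,a';θ^T)` converge linearly: `|δ(a,a';θ^T)| ≤ 0.588^T`. -/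
theorem dpo_unif_linear_convergence
    {Y : Type*} [Fintype Y] [Nonempty Y]
    (A : ℕ) (hA : A = Fintype.card Y)
    (r : Y → ℝ) (hr : ∀ a, 0 ≤ r a ∧ r a ≤ 1)
    (β : ℝ) (hβ : 0 < β)
    (θ : ℕ → Y → ℝ) (hθ0 : θ 0 = 0)
    (hupd : ∀ t a, θ (t + 1) a = θ t a +
      (4 / (β * A)) * ∑ a' : Y, (sig (r a - r a') - sig (β * (θ t a - θ t a')))) :
    ∀ (T : ℕ) (a a' : Y),
      |r a - r a' - β * (θ T a - θ T a')| ≤ (0.588 : ℝ) ^ T := by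
  subst hA
  have hr' : ∀ a a', |r a - r a'| ≤ 1 := fun a a' =>
    abs_sub_le_iff.2 ⟨by linarith [hr a, hr a'], by linarith [hr a, hr a']⟩
  intro T
  induction T with
  | zero => simpa [hθ0] using hr'
  | succ t ih =>
    intro a a'
    rw [pow_succ']
    exact abs_dpoUnif_gap_succ_le hr' hβ.ne' (hupd t) (pow_le_one₀ (by norm_num) (by norm_num))
      ih a a'
end

section
/- (Lemma 1, performance difference lemma.) Let π_ref and π be probability distributions on a finite set 𝒴 with π_ref(y) > 0 and π(y) > 0 for all y, let r : 𝒴 → ℝ, let β > 0, and let π⋆(y) := π_ref(y) exp(r(y)/β) / Z with Z := Σ_{y∈𝒴} π_ref(y) exp(r(y)/β). Define the value V(μ) := Σ_{y∈𝒴} μ(y) r(y) − β Σ_{y∈𝒴} μ(y) log(μ(y)/π_ref(y)) for a full-support distribution μ, and the Kullback–Leibler divergence KL(π⋆‖π) := Σ_{y∈𝒴} π⋆(y) log(π⋆(y)/π(y)). Then V(π⋆) − V(π) = Σ_{y,y'∈𝒴} π⋆(y) π(y') · ( r(y) − r(y') − β log( π(y) π_ref(y') / (π_ref(y) π(y'))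 ) ) − β KL(π⋆‖π), and consequently V(π⋆) − V(π) ≤ Σ_{y,y'∈𝒴} π⋆(y) π(y') · ( r(y) − r(y') − β log( π(y) π_ref(y') / (π_ref(y) π(y')) ) ). -/
/-!
Write `g := r - β log (π / πref)`. The log-ratio in the double sum splits as
`log (π y / πref y) - log (π y' / πref y')`, so the integrand is `g y - g y'` and the double
sum is `E_{π⋆} g - E_π g`. Splitting `log (μ / πref) = log (μ / π) + log (π / πref)` shows
`V μ = E_μ g - β KL(μ‖π)` for every distribution `μ`, and `KL(π‖π) = 0`; this gives the identity
for any `μ` in place of `π⋆`. The bound is Gibbs' inequality `KL ≥ 0`.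
-/

open Finset

namespace PerformanceDifference

open Real (log log_div log_mul self_sub_one_le_mul_log)

variable {ι : Type*} [Fintype ι]

noncomputable def klDiv (p q : ι → ℝ) : ℝ := ∑ i, p i * log (p i / q i)

noncomputable def regValue (πref r : ι → ℝ) (β : ℝ) (μ : ι → ℝ) : ℝ :=
  ∑ i, μ i * r i - β * klDiv μ πref

lemma sub_le_mul_log_div {p q : ℝ} (hp : 0 ≤ p) (hq : 0 < q) : p - q ≤ p * log (p / q) := by
  have h := mul_le_mul_of_nonneg_left (self_sub_one_le_mul_log (div_nonneg hp hq.le)) hq.le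
  rwa [mul_sub, mul_div_cancel₀ _ hq.ne', mul_one, ← mul_assoc, mul_div_cancel₀ _ hq.ne'] at h

lemma klDiv_nonneg {p q : ι → ℝ} (hp : ∀ i, 0 ≤ p i) (hq : ∀ i, 0 < q i)
    (hsum : ∑ i, q i ≤ ∑ i, p i) : 0 ≤ klDiv p q :=
  calc 0 ≤ ∑ i, (p i - q i) := by rw [sum_sub_distrib]; linarith
    _ ≤ klDiv p q := sum_le_sum fun i _ => sub_le_mul_log_div (hp i) (hq i)

@[simp]
lemma klDiv_self (p : ι → ℝ) : klDiv p p = 0 := by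
  simp [klDiv]

lemma mul_log_div_eq_add (x : ℝ) {b c : ℝ} (hb : b ≠ 0) (hc : c ≠ 0) :
    x * log (x / c) = x * log (x / b) + x * log (b / c) := by
  rcases eq_or_ne x 0 with rfl | hx
  · simp
  rw [← mul_add, ← log_mul (div_ne_zero hx hb) (div_ne_zero hb hc), div_mul_div_cancel₀ hb]

lemma log_mul_div_mul_eq_sub {a b c d : ℝ} (ha : a ≠ 0) (hb : b ≠ 0) (hc : c ≠ 0) (hd : d ≠ 0) :
    log (a * b / (c * d)) = log (a / c) - log (d / b) := by
  rw [← log_div (div_ne_zero ha hc) (div_ne_zero hd hb)]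
  congr 1
  field_simp

lemma sum_sum_mul_mul_sub {R : Type*} [CommRing R] {p q : ι → R}
    (hp : ∑ i, p i = 1) (hq : ∑ i, q i = 1) (f : ι → R) :
    ∑ i, ∑ j, p i * q j * (f i - f j) = ∑ i, p i * f i - ∑ j, q j * f j := by
  have h : ∀ i j, p i * q j * (f i - f j) = q j * (p i * f i) - p i * (q j * f j) :=
    fun i j => by ring
  simp only [h, sum_sub_distrib, ← sum_mul, ← mul_sum, hp, hq, one_mul]

lemma regValue_eq_sum_sub_klDiv (πref r : ι → ℝ) (β : ℝ) (μ : ι → ℝ) {π : ι → ℝ}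
    (hπ : ∀ i, π i ≠ 0) (hπref : ∀ i, πref i ≠ 0) :
    regValue πref r β μ = ∑ i, μ i * (r i - β * log (π i / πref i)) - β * klDiv μ π := by
  have hsplit : ∀ i, μ i * log (μ i / πref i) = μ i * log (μ i / π i) + μ i * log (π i / πref i) :=
    fun i => mul_log_div_eq_add _ (hπ i) (hπref i)
  simp only [regValue, klDiv, hsplit, sum_add_distrib]
  simp only [mul_sub, sum_sub_distrib, ← mul_sum, mul_left_comm (μ _) β]
  ring

theorem regValue_sub_regValue (πref r : ι → ℝ) (β : ℝ) {μ π : ι → ℝ}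
    (hμ : ∑ i, μ i = 1) (hπsum : ∑ i, π i = 1) (hπ : ∀ i, π i ≠ 0) (hπref : ∀ i, πref i ≠ 0) :
    regValue πref r β μ - regValue πref r β π =
      (∑ y, ∑ y', μ y * π y' *
        (r y - r y' - β * log (π y * πref y' / (πref y * π y')))) - β * klDiv μ π := by
  have hgap : ∀ y y', r y - r y' - β * log (π y * πref y' / (πref y * π y')) =
      (r y - β * log (π y / πref y)) - (r y' - β * log (π y' / πref y')) := fun y y' => by
    rw [log_mul_div_mul_eq_sub (hπ y) (hπref y') (hπref y) (hπ y')]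
    ring
  simp only [hgap, sum_sum_mul_mul_sub hμ hπsum, regValue_eq_sum_sub_klDiv πref r β _ hπ hπref,
    klDiv_self]
  ring

end PerformanceDifference

theorem performance_difference_lemma_general
    {Y : Type*} [Fintype Y] [Nonempty Y]
    (πref π : Y → ℝ)
    (href : ∀ y, 0 < πref y) (hπ : ∀ y, 0 < π y)
    (hπsum : ∑ y : Y, π y = 1)
    (r : Y → ℝ) (β : ℝ) (hβ : 0 < β) :
    let Z : ℝ := ∑ y : Y, πref y * Real.exp (r y / β)
    let πstar : Y → ℝ := fun y => πref y * Real.exp (r y / β) / Z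
    let V : (Y → ℝ) → ℝ := fun μ =>
      (∑ y : Y, μ y * r y) - β * ∑ y : Y, μ y * Real.log (μ y / πref y)
    let KL : ℝ := ∑ y : Y, πstar y * Real.log (πstar y / π y)
    V πstar - V π =
      (∑ y : Y, ∑ y' : Y, πstar y * π y' *
        (r y - r y' - β * Real.log (π y * πref y' / (πref y * π y')))) - β * KL
    ∧
    V πstar - V π ≤
      ∑ y : Y, ∑ y' : Y, πstar y * π y' *
        (r y - r y' - β * Real.log (π y * πref y' / (πref y * π y'))) := by
  intro Z πstar V KL
  have hZ : 0 < Z := sum_pos (fun y _ => mul_pos (href y) (Real.exp_pos _)) univ_nonempty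
  have hstar_sum : ∑ y, πstar y = 1 := by rw [← sum_div, div_self hZ.ne']
  have hidentity : V πstar - V π = _ - β * KL :=
    PerformanceDifference.regValue_sub_regValue πref r β hstar_sum hπsum (fun y => (hπ y).ne')
      (fun y => (href y).ne')
  have hKL : 0 ≤ KL :=
    PerformanceDifference.klDiv_nonneg
      (fun y => (div_pos (mul_pos (href y) (Real.exp_pos _)) hZ).le) hπ
      (hπsum.trans hstar_sum.symm).le
  exact ⟨hidentity, by linarith [mul_nonneg hβ.le hKL]⟩

/-- **Lemma 1 (Performance difference lemma).**
For full-support distributions `πref`, `π` on a finite set, reward `r`,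
regularization `β > 0`, and the optimal policy
`π⋆(y) ∝ πref(y) exp(r(y)/β)`, the difference of the KL-regularized values
equals the double expectation of the implicit-reward gap minus `β·KL(π⋆‖π)`,
and is hence upper bounded by the double expectation alone. -/
theorem performance_difference_lemma
    {Y : Type*} [Fintype Y] [Nonempty Y]
    (πref π : Y → ℝ)
    (href : ∀ y, 0 < πref y) (hπ : ∀ y, 0 < π y)
    (hrefsum : ∑ y : Y, πref y = 1) (hπsum : ∑ y : Y, π y = 1)
    (r : Y → ℝ) (β : ℝ) (hβ : 0 < β) :
    let Z : ℝ := ∑ y : Y, πref y * Real.exp (r y / β)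
    let πstar : Y → ℝ := fun y => πref y * Real.exp (r y / β) / Z
    let V : (Y → ℝ) → ℝ := fun μ =>
      (∑ y : Y, μ y * r y) - β * ∑ y : Y, μ y * Real.log (μ y / πref y)
    let KL : ℝ := ∑ y : Y, πstar y * Real.log (πstar y / π y)
    V πstar - V π =
      (∑ y : Y, ∑ y' : Y, πstar y * π y' *
        (r y - r y' - β * Real.log (π y * πref y' / (πref y * π y')))) - β * KL
    ∧
    V πstar - V π ≤
      ∑ y : Y, ∑ y' : Y, πstar y * π y' *
        (r y - r y' - β * Real.log (π y * πref y' / (πref y * π y'))) :=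
  performance_difference_lemma_general πref π href hπ hπsum r β hβ
end

section
/- (First-step bound for exact DPO-Unif.) Let θ^(0) = 0 and let θ^(1) be obtained by one exact DPO-Unif step with learning rate η = 1/(β²A): θ^(1)_a = (4/(βA)) Σ_{a''∈𝒴} Δ(a,a'';θ^(0)) for every a. Then for all a, a' ∈ 𝒴 with r(a) ≥ r(a'), 0 ≤ δ(a,a';θ^(1)) ≤ (1 − 4σ'(1)) (r(a) − r(a')) ≤ 0.214, and moreover |β(θ^(1)_a − θ^(1)_{a'})| ≤ 1.214 for all a, a' ∈ 𝒴. -/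
/-- The derivative of the sigmoid function. -/
noncomputable def sig' (x : ℝ) : ℝ := sig x * (1 - sig x)

open Finset

lemma sig_neg (x : ℝ) : sig (-x) = 1 - sig x := by
  have := Real.exp_pos x
  simp only [sig, neg_neg, Real.exp_neg]
  field_simp
  ring

lemma monotone_sig : Monotone sig := fun x y h => by
  unfold sig
  gcongr

lemma hasDerivAt_sig (x : ℝ) : HasDerivAt sig (sig' x) x := by
  have h : HasDerivAt (fun y => 1 + Real.exp (-y)) (-Real.exp (-x)) x := by
    simpa using ((Real.hasDerivAt_exp (-x)).comp x (hasDerivAt_neg x)).const_add 1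
  rw [show sig = (fun y => 1 + Real.exp (-y))⁻¹ from funext fun y => one_div _]
  refine (h.inv (by positivity)).congr_deriv ?_
  simp only [sig', sig]
  field_simp
  ring

lemma deriv_sig : deriv sig = sig' := funext fun x => (hasDerivAt_sig x).deriv

lemma differentiable_sig : Differentiable ℝ sig := fun x => (hasDerivAt_sig x).differentiableAt

lemma sig'_le_quarter (x : ℝ) : sig' x ≤ 1 / 4 := by
  nlinarith [sq_nonneg (sig x - 1 / 2), show sig' x = sig x * (1 - sig x) from rfl]

lemma sig'_one_le_sig' {x : ℝ} (h : |x| ≤ 1) : sig' 1 ≤ sig' x := by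
  obtain ⟨h₁, h₂⟩ := abs_le.mp h
  have hle : sig x ≤ sig 1 := monotone_sig h₂
  have hge : 1 - sig 1 ≤ sig x := sig_neg 1 ▸ monotone_sig h₁
  unfold sig'
  nlinarith

lemma sig_sub_sig_le {x y : ℝ} (h : y ≤ x) : sig x - sig y ≤ (x - y) / 4 := by
  have := image_sub_le_mul_sub_of_deriv_le differentiable_sig
    (fun z => deriv_sig ▸ sig'_le_quarter z) h
  linarith

lemma sig'_one_mul_le_sig_sub_sig {x y : ℝ} (hy : -1 ≤ y) (h : y ≤ x) (hx : x ≤ 1) :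
    sig' 1 * (x - y) ≤ sig x - sig y :=
  (convex_Icc (-1) 1).mul_sub_le_image_sub_of_le_deriv differentiable_sig.continuous.continuousOn
    differentiable_sig.differentiableOn
    (fun _ hz => deriv_sig ▸
      sig'_one_le_sig' (abs_le.mpr (interior_subset (s := Set.Icc (-1) 1) hz)))
    y ⟨hy, h.trans hx⟩ x ⟨hy.trans h, hx⟩ h

lemma sig'_one_ge : (0.1965 : ℝ) ≤ sig' 1 := by
  have hE₁ := Real.exp_one_gt_d9
  have hE₂ := Real.exp_one_lt_d9
  have hsig' : sig' 1 = Real.exp 1 / (Real.exp 1 + 1) ^ 2 := by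
    have := Real.exp_pos 1
    simp only [sig', sig, Real.exp_neg]
    field_simp
    ring
  rw [hsig', le_div_iff₀ (by positivity)]
  nlinarith [mul_pos (sub_pos.mpr hE₁) (sub_pos.mpr hE₂)]

section

variable {Y : Type*} [Fintype Y]

lemma mul_sub_eq_mul_sum_sub_of_eq_div_mul_sum {κ β c : ℝ} (hβ : β ≠ 0) {f : Y → Y → ℝ}
    {θ : Y → ℝ} (hθ : ∀ a, θ a = κ / β * ∑ a'', (f a a'' - c)) (a a' : Y) :
    β * (θ a - θ a') = κ * ∑ a'', (f a a'' - f a' a'') := by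
  simp_rw [hθ, ← mul_sub, ← sum_sub_distrib, sub_sub_sub_cancel_right]
  field_simp

lemma four_div_card_mul_sum_sig_sub_sig_le {r : Y → ℝ} {a a' : Y} (h : r a' ≤ r a) :
    4 / Fintype.card Y * ∑ a'', (sig (r a - r a'') - sig (r a' - r a'')) ≤ r a - r a' := by
  have hcard : (0 : ℝ) < Fintype.card Y := Nat.cast_pos.mpr (Fintype.card_pos_iff.mpr ⟨a⟩)
  have hsum : ∑ a'', (sig (r a - r a'') - sig (r a' - r a'')) ≤
      Fintype.card Y * ((r a - r a') / 4) := by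
    simpa using sum_le_card_nsmul univ _ _ fun a'' _ =>
      (sig_sub_sig_le (by linarith : r a' - r a'' ≤ r a - r a'')).trans_eq (by ring)
  rw [div_mul_eq_mul_div, div_le_iff₀ hcard]
  linarith

lemma le_four_div_card_mul_sum_sig_sub_sig {r : Y → ℝ} (hr : ∀ a, r a ∈ Set.Icc 0 1)
    {a a' : Y} (h : r a' ≤ r a) :
    4 * sig' 1 * (r a - r a') ≤
      4 / Fintype.card Y * ∑ a'', (sig (r a - r a'') - sig (r a' - r a'')) := by
  have hcard : (0 : ℝ) < Fintype.card Y := Nat.cast_pos.mpr (Fintype.card_pos_iff.mpr ⟨a⟩)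
  have hsum : Fintype.card Y * (sig' 1 * (r a - r a')) ≤
      ∑ a'', (sig (r a - r a'') - sig (r a' - r a'')) := by
    simpa using card_nsmul_le_sum univ _ _ fun a'' _ =>
      (sig'_one_mul_le_sig_sub_sig (by linarith [(hr a').1, (hr a'').2])
        (by linarith : r a' - r a'' ≤ r a - r a'') (by linarith [(hr a).2, (hr a'').1])).trans_eq'
        (by ring)
  rw [div_mul_eq_mul_div, le_div_iff₀ hcard]
  linarith

end

theorem dpo_unif_first_step_bound_general
    {Y : Type*} [Fintype Y]
    (A : ℕ) (hA : A = Fintype.card Y)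
    (r : Y → ℝ) (hr : ∀ a, 0 ≤ r a ∧ r a ≤ 1)
    (β : ℝ) (hβ : 0 < β)
    (θ0 θ1 : Y → ℝ) (hθ0 : θ0 = 0)
    (hupd : ∀ a, θ1 a = θ0 a +
      (4 / (β * A)) * ∑ a'' : Y, (sig (r a - r a'') - sig (β * (θ0 a - θ0 a'')))) :
    (∀ a a' : Y, r a' ≤ r a →
      0 ≤ r a - r a' - β * (θ1 a - θ1 a') ∧
      r a - r a' - β * (θ1 a - θ1 a') ≤ (1 - 4 * sig' 1) * (r a - r a') ∧
      (1 - 4 * sig' 1) * (r a - r a') ≤ 0.214)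
    ∧
    (∀ a a' : Y, |β * (θ1 a - θ1 a')| ≤ 1.214) := by
  subst hθ0 hA
  have hθ1 : ∀ a, θ1 a = 4 / Fintype.card Y / β * ∑ a'', (sig (r a - r a'') - sig 0) := by
    intro a
    rw [hupd a, div_div, mul_comm β]
    simp
  have hgap := mul_sub_eq_mul_sum_sub_of_eq_div_mul_sum hβ.ne' hθ1
  have hupper (a a' : Y) (h : r a' ≤ r a) : β * (θ1 a - θ1 a') ≤ r a - r a' :=
    hgap a a' ▸ four_div_card_mul_sum_sig_sub_sig_le h
  have hlower (a a' : Y) (h : r a' ≤ r a) : 4 * sig' 1 * (r a - r a') ≤ β * (θ1 a - θ1 a') :=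
    hgap a a' ▸ le_four_div_card_mul_sum_sig_sub_sig hr h
  have hσ := sig'_one_ge
  have habs (a a' : Y) (h : r a' ≤ r a) : |β * (θ1 a - θ1 a')| ≤ 1.214 := by
    have := hlower a a' h
    rw [abs_le]
    constructor <;> nlinarith [hupper a a' h, hr a, hr a']
  refine ⟨fun a a' h => ⟨by linarith [hupper a a' h], by linarith [hlower a a' h], ?_⟩,
    fun a a' => ?_⟩
  · nlinarith [hr a, hr a', sig'_le_quarter 1]
  · rcases le_total (r a') (r a) with h | h
    · exact habs a a' h
    · rw [← neg_sub, mul_neg, abs_neg]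
      exact habs a' a h

/-- **First-step bound for exact DPO-Unif.**
Starting from `θ⁰ = 0`, after one exact DPO-Unif step with learning rate
`η = 1/(β²A)`, for all `a, a'` with `r(a) ≥ r(a')` one has
`0 ≤ δ(a,a';θ¹) ≤ (1 - 4σ'(1))(r(a) - r(a')) ≤ 0.214`, and all logit gaps
satisfy `|β(θ¹_a - θ¹_{a'})| ≤ 1.214`. -/
theorem dpo_unif_first_step_bound
    {Y : Type*} [Fintype Y] [Nonempty Y]
    (A : ℕ) (hA : A = Fintype.card Y)
    (r : Y → ℝ) (hr : ∀ a, 0 ≤ r a ∧ r a ≤ 1)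
    (β : ℝ) (hβ : 0 < β)
    (θ0 θ1 : Y → ℝ) (hθ0 : θ0 = 0)
    (hupd : ∀ a, θ1 a = θ0 a +
      (4 / (β * A)) * ∑ a'' : Y, (sig (r a - r a'') - sig (β * (θ0 a - θ0 a'')))) :
    (∀ a a' : Y, r a' ≤ r a →
      0 ≤ r a - r a' - β * (θ1 a - θ1 a') ∧
      r a - r a' - β * (θ1 a - θ1 a') ≤ (1 - 4 * sig' 1) * (r a - r a') ∧
      (1 - 4 * sig' 1) * (r a - r a') ≤ 0.214)
    ∧
    (∀ a a' : Y, |β * (θ1 a - θ1 a')| ≤ 1.214) :=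
  dpo_unif_first_step_bound_general A hA r hr β hβ θ0 θ1 hθ0 hupd
end

section
/- (Spectrum of the linearized DPO-Unif iteration matrix in the 3-armed example.) Let σ(x) = 1/(1+e^{−x}), σ'(x) = σ(x)(1−σ(x)), and set s₁ = σ'(1/3), s₂ = σ'(2/3), s₃ = σ'(1). For every c ∈ (0, 8/3], the 2×2 real matrix B = [[1 − c(2s₁ + s₃), c(s₂ − s₃)], [c(s₁ − s₃), 1 − c(2s₂ + s₃)]] has two distinct real eigenvalues λ₁ ≠ λ₂, and both satisfy |λ₁| < 1 and |λ₂| < 1. -/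
set_option maxHeartbeats 1000000

lemma sig'_eq (x : ℝ) : sig' x = Real.exp x / (1 + Real.exp x) ^ 2 := by
  unfold sig' sig
  rw [Real.exp_neg]
  have h : Real.exp x > 0 := Real.exp_pos x
  field_simp
  ring

lemma exp_third_bounds :
    (1.3956 : ℝ) < Real.exp (1/3) ∧ Real.exp (1/3) < 1.39562 := by
  have h3 : Real.exp (1/3) ^ 3 = Real.exp 1 := by
    rw [← Real.exp_nat_mul]
    norm_num
  have hp : (0:ℝ) < Real.exp (1/3) := Real.exp_pos _
  have he1 : (2.7182818283 : ℝ) < Real.exp 1 := Real.exp_one_gt_d9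
  have he2 : Real.exp 1 < 2.7182818286 := Real.exp_one_lt_d9
  constructor
  · by_contra h
    push_neg at h
    nlinarith [pow_le_pow_left₀ hp.le h 3]
  · by_contra h
    push_neg at h
    nlinarith [pow_le_pow_left₀ (by norm_num : (0:ℝ) ≤ 1.39562) h 3]

lemma s_bounds :
    (0.24318 : ℝ) < sig' (1/3) ∧ sig' (1/3) < 0.24319 ∧
    (0.22415 : ℝ) < sig' (2/3) ∧ sig' (2/3) < 0.22416 ∧
    (0.19661 : ℝ) < sig' 1 ∧ sig' 1 < 0.19662 := by
  obtain ⟨hu1, hu2⟩ := exp_third_bounds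
  set u := Real.exp (1/3) with hu
  have hup : (0:ℝ) < u := Real.exp_pos _
  have h2 : Real.exp (2/3) = u ^ 2 := by
    rw [hu, ← Real.exp_nat_mul]; norm_num
  have h3 : Real.exp 1 = u ^ 3 := by
    rw [hu, ← Real.exp_nat_mul]; norm_num
  have hv1 : (1.94769 : ℝ) < u ^ 2 := by nlinarith
  have hv2 : u ^ 2 < 1.94776 := by nlinarith
  have hw1 : (2.7182818283 : ℝ) < u ^ 3 := h3 ▸ Real.exp_one_gt_d9
  have hw2 : u ^ 3 < 2.7182818286 := h3 ▸ Real.exp_one_lt_d9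
  have e1 : sig' (1/3) = u / (1 + u) ^ 2 := by rw [sig'_eq]
  have e2 : sig' (2/3) = u ^ 2 / (1 + u ^ 2) ^ 2 := by rw [sig'_eq, h2]
  have e3 : sig' 1 = u ^ 3 / (1 + u ^ 3) ^ 2 := by rw [sig'_eq, h3]
  have d1 : (0:ℝ) < (1 + u) ^ 2 := by positivity
  have d2 : (0:ℝ) < (1 + u ^ 2) ^ 2 := by positivity
  have d3 : (0:ℝ) < (1 + u ^ 3) ^ 2 := by positivity
  rw [e1, e2, e3]
  rw [div_lt_iff₀ d1, lt_div_iff₀ d1, div_lt_iff₀ d2, lt_div_iff₀ d2,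
    div_lt_iff₀ d3, lt_div_iff₀ d3]
  refine ⟨by nlinarith, by nlinarith, by nlinarith [sq_nonneg (u^2 - 1.9477)],
    by nlinarith [sq_nonneg (u^2 - 1.9477)], by nlinarith [sq_nonneg (u^3 - 2.7182818284)],
    by nlinarith [sq_nonneg (u^3 - 2.7182818284)]⟩

/-- **Spectrum of the linearized DPO-Unif iteration matrix in the 3-armed example.**
With `s₁ = σ'(1/3)`, `s₂ = σ'(2/3)`, `s₃ = σ'(1)` and any `c ∈ (0, 8/3]`, the
matrix `B = [[1 - c(2s₁+s₃), c(s₂-s₃)], [c(s₁-s₃), 1 - c(2s₂+s₃)]]` has two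
distinct real eigenvalues, both of absolute value less than `1`. -/
theorem dpo_unif_linearization_spectrum
    (c : ℝ) (hc0 : 0 < c) (hc1 : c ≤ 8 / 3) :
    ∃ l₁ l₂ : ℝ, l₁ ≠ l₂ ∧ |l₁| < 1 ∧ |l₂| < 1 ∧
      ∀ x : ℝ,
        (x • (1 : Matrix (Fin 2) (Fin 2) ℝ) -
          !![1 - c * (2 * sig' (1/3) + sig' 1), c * (sig' (2/3) - sig' 1);
             c * (sig' (1/3) - sig' 1), 1 - c * (2 * sig' (2/3) + sig' 1)]).det
          = (x - l₁) * (x - l₂) := by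
  obtain ⟨h1a, h1b, h2a, h2b, h3a, h3b⟩ := s_bounds
  set s₁ := sig' (1/3) with hs₁
  set s₂ := sig' (2/3) with hs₂
  set s₃ := sig' 1 with hs₃
  have hdet : ∀ x : ℝ,
      (x • (1 : Matrix (Fin 2) (Fin 2) ℝ) -
          !![1 - c * (2 * s₁ + s₃), c * (s₂ - s₃);
             c * (s₁ - s₃), 1 - c * (2 * s₂ + s₃)]).det
        = (x - (1 - c * (2 * s₁ + s₃))) * (x - (1 - c * (2 * s₂ + s₃)))
          - c * (s₂ - s₃) * (c * (s₁ - s₃)) := by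
    intro x
    rw [Matrix.det_fin_two]
    simp [Matrix.sub_apply, Matrix.smul_apply, Matrix.one_apply]
  set S : ℝ := s₁ + s₂ + s₃ with hS
  set Δ : ℝ := (s₁ - s₂) ^ 2 + (s₂ - s₃) * (s₁ - s₃) with hΔ
  have hΔpos : 0 < Δ := by rw [hΔ]; nlinarith
  have hΔhi : Δ < 0.0406 ^ 2 := by rw [hΔ]; nlinarith
  set r : ℝ := Real.sqrt Δ with hr
  have hrpos : 0 < r := Real.sqrt_pos.mpr hΔpos
  have hrsq : r * r = Δ := Real.mul_self_sqrt hΔpos.le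
  have hrhi : r < 0.0406 := by nlinarith
  have hShi : S < 0.66397 := by rw [hS]; nlinarith
  have hSlo : (0.66394 : ℝ) < S := by rw [hS]; nlinarith
  refine ⟨1 - c * (S - r), 1 - c * (S + r), ?_, ?_, ?_, ?_⟩
  · have h : c * (S - r) < c * (S + r) := by nlinarith
    intro h'; nlinarith
  · rw [abs_lt]; constructor
    · nlinarith
    · nlinarith
  · rw [abs_lt]; constructor
    · nlinarith
    · nlinarith
  · intro x
    rw [hdet x]
    rw [hS] at *
    rw [hΔ] at hrsq
    linear_combination (c^2) * hrsq
end

section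
/- (Two-sided geometric bounds for a quadratically perturbed linear recursion.) Let λ₁, λ₂ ∈ ℝ with λ_min := min(|λ₁|, |λ₂|) > 0 and λ_max := max(|λ₁|, |λ₂|) < 1, let α > 0, and let (p_t)_{t∈ℕ}, (q_t)_{t∈ℕ} be real sequences satisfying, for every t, |p_{t+1} − λ₁ p_t| ≤ 4α(p_t² + q_t²) and |q_{t+1} − λ₂ q_t| ≤ 4α(p_t² + q_t²). If |p₀| + |q₀| ≤ min(λ_min, 1 − λ_max)/(16α), then for every t ∈ ℕ, (λ_min/2)^t (|p₀| + |q₀|) ≤ |p_t| + |q_t| ≤ ((1 + λ_max)/2)^t (|p₀| + |q₀|). -/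
/-- **Two-sided geometric bounds for a quadratically perturbed linear recursion.**
If `|p_{t+1} - λ₁ p_t| ≤ 4α(p_t² + q_t²)`, `|q_{t+1} - λ₂ q_t| ≤ 4α(p_t² + q_t²)`
and the initial size `|p₀| + |q₀|` is at most `min(λ_min, 1-λ_max)/(16α)`, then
`(λ_min/2)^t (|p₀|+|q₀|) ≤ |p_t| + |q_t| ≤ ((1+λ_max)/2)^t (|p₀|+|q₀|)`. -/
theorem perturbed_linear_recursion_bounds
    (l₁ l₂ α : ℝ) (hα : 0 < α)
    (hmin : 0 < min |l₁| |l₂|) (hmax : max |l₁| |l₂| < 1)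
    (p q : ℕ → ℝ)
    (hp : ∀ t, |p (t + 1) - l₁ * p t| ≤ 4 * α * (p t ^ 2 + q t ^ 2))
    (hq : ∀ t, |q (t + 1) - l₂ * q t| ≤ 4 * α * (p t ^ 2 + q t ^ 2))
    (h0 : |p 0| + |q 0| ≤ min (min |l₁| |l₂|) (1 - max |l₁| |l₂|) / (16 * α)) :
    ∀ t : ℕ,
      (min |l₁| |l₂| / 2) ^ t * (|p 0| + |q 0|) ≤ |p t| + |q t| ∧
      |p t| + |q t| ≤ ((1 + max |l₁| |l₂|) / 2) ^ t * (|p 0| + |q 0|) := by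
  have hm20 : (0:ℝ) ≤ max |l₁| |l₂| := le_trans hmin.le (min_le_max)
  have hr1 : (0:ℝ) ≤ (1 + max |l₁| |l₂|) / 2 := by linarith
  have hr2 : (1 + max |l₁| |l₂|) / 2 ≤ 1 := by linarith
  have hS0 : (0:ℝ) ≤ |p 0| + |q 0| := by positivity
  intro t
  induction t with
  | zero => constructor <;> simp
  | succ t ih =>
    obtain ⟨ihl, ihu⟩ := ih
    have hpow : ((1 + max |l₁| |l₂|) / 2) ^ t ≤ 1 := pow_le_one₀ hr1 hr2
    have hSle : |p t| + |q t| ≤ |p 0| + |q 0| :=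
      le_trans ihu (by nlinarith)
    have hSsmall : |p t| + |q t| ≤ min (min |l₁| |l₂|) (1 - max |l₁| |l₂|) / (16 * α) :=
      le_trans hSle h0
    have h16 : 16 * α * (|p t| + |q t|) ≤ min (min |l₁| |l₂|) (1 - max |l₁| |l₂|) := by
      rw [div_eq_mul_inv] at hSsmall
      have h16α : (0:ℝ) < 16 * α := by linarith
      calc 16 * α * (|p t| + |q t|) ≤ 16 * α * (min (min |l₁| |l₂|) (1 - max |l₁| |l₂|) * (16*α)⁻¹) :=
            by exact mul_le_mul_of_nonneg_left hSsmall h16α.le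
        _ = min (min |l₁| |l₂|) (1 - max |l₁| |l₂|) := by field_simp
    have h16a : 16 * α * (|p t| + |q t|) ≤ min |l₁| |l₂| :=
      le_trans h16 (min_le_left _ _)
    have h16b : 16 * α * (|p t| + |q t|) ≤ 1 - max |l₁| |l₂| :=
      le_trans h16 (min_le_right _ _)
    have hSn : (0:ℝ) ≤ |p t| + |q t| := by positivity
    have hsq : p t ^ 2 + q t ^ 2 ≤ (|p t| + |q t|) ^ 2 := by
      nlinarith [abs_nonneg (p t), abs_nonneg (q t), sq_abs (p t), sq_abs (q t)]
    have hquad : 4 * α * (p t ^ 2 + q t ^ 2) ≤ 4 * α * (|p t| + |q t|) ^ 2 := by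
      nlinarith
    have hpu : |p (t+1)| ≤ |l₁| * |p t| + 4 * α * (|p t| + |q t|) ^ 2 := by
      have h1 := abs_sub_abs_le_abs_sub (p (t+1)) (l₁ * p t)
      have h2 := hp t
      rw [abs_mul] at h1
      linarith
    have hqu : |q (t+1)| ≤ |l₂| * |q t| + 4 * α * (|p t| + |q t|) ^ 2 := by
      have h1 := abs_sub_abs_le_abs_sub (q (t+1)) (l₂ * q t)
      have h2 := hq t
      rw [abs_mul] at h1
      linarith
    have hpl : |l₁| * |p t| - 4 * α * (|p t| + |q t|) ^ 2 ≤ |p (t+1)| := by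
      have h1 := abs_sub_abs_le_abs_sub (l₁ * p t) (p (t+1))
      have h2 := hp t
      rw [abs_mul, abs_sub_comm] at h1
      linarith
    have hql : |l₂| * |q t| - 4 * α * (|p t| + |q t|) ^ 2 ≤ |q (t+1)| := by
      have h1 := abs_sub_abs_le_abs_sub (l₂ * q t) (q (t+1))
      have h2 := hq t
      rw [abs_mul, abs_sub_comm] at h1
      linarith
    have hl1max : |l₁| ≤ max |l₁| |l₂| := le_max_left _ _
    have hl2max : |l₂| ≤ max |l₁| |l₂| := le_max_right _ _
    have hl1min : min |l₁| |l₂| ≤ |l₁| := min_le_left _ _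
    have hl2min : min |l₁| |l₂| ≤ |l₂| := min_le_right _ _
    constructor
    · -- lower bound
      have h8 : 8 * α * (|p t| + |q t|) ^ 2 ≤ min |l₁| |l₂| / 2 * (|p t| + |q t|) := by
        rw [pow_two]; linarith [mul_le_mul_of_nonneg_right h16a hSn]
      have hstep : min |l₁| |l₂| / 2 * (|p t| + |q t|) ≤ |p (t+1)| + |q (t+1)| := by
        linarith [mul_le_mul_of_nonneg_right hl1min (abs_nonneg (p t)),
          mul_le_mul_of_nonneg_right hl2min (abs_nonneg (q t))]
      calc (min |l₁| |l₂| / 2) ^ (t+1) * (|p 0| + |q 0|)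
          = min |l₁| |l₂| / 2 * ((min |l₁| |l₂| / 2) ^ t * (|p 0| + |q 0|)) := by ring
        _ ≤ min |l₁| |l₂| / 2 * (|p t| + |q t|) :=
            mul_le_mul_of_nonneg_left ihl (by positivity)
        _ ≤ |p (t+1)| + |q (t+1)| := hstep
    · -- upper bound
      have h8 : 8 * α * (|p t| + |q t|) ^ 2 ≤ (1 - max |l₁| |l₂|) / 2 * (|p t| + |q t|) := by
        rw [pow_two]; linarith [mul_le_mul_of_nonneg_right h16b hSn]
      have hstep : |p (t+1)| + |q (t+1)| ≤ (1 + max |l₁| |l₂|) / 2 * (|p t| + |q t|) := by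
        linarith [mul_le_mul_of_nonneg_right hl1max (abs_nonneg (p t)),
          mul_le_mul_of_nonneg_right hl2max (abs_nonneg (q t))]
      calc |p (t+1)| + |q (t+1)| ≤ (1 + max |l₁| |l₂|) / 2 * (|p t| + |q t|) := hstep
        _ ≤ (1 + max |l₁| |l₂|) / 2 * (((1 + max |l₁| |l₂|) / 2) ^ t * (|p 0| + |q 0|)) :=
            mul_le_mul_of_nonneg_left ihu hr1
        _ = ((1 + max |l₁| |l₂|) / 2) ^ (t+1) * (|p 0| + |q 0|) := by ring
end

section
/- (Moment-recursion induction for empirical DPO.) Fix s ∈ (0, 1/576) and let f : ℕ × ℕ → ℝ be nonnegative with f(t, 0) = 1 for all t, and suppose: (i) f(0, n) ≤ 1 for all n ≥ 1; (ii) f(1, n) ≤ (6√n · s + 1/2)^{2n} for all n ≥ 1; and (iii) for all t ≥ 1 and n ≥ 1, f(t+1, n) ≤ Σ_{k=0}^{2n} C(2n, k) (6s√n)^k (1/2)^{2n−k} f(t, 2n−k), where C(2n,k) is the binomial coefficient. Then for all integers n ≥ 1 and t ≥ 0 with n · 2^t ≤ 1/s, f(t, n) ≤ (12√n · s + 2^{−t})^{2n}.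 In particular, for T = ⌊log₂(1/s)⌋ one has √(f(T, 1)) ≤ 12s + 2^{−T} < 14s. -/
private 
lemma key_ineq (s x y : ℝ) (hs0 : 0 < s) (hs1 : s < 1/576) (hx : 0 ≤ x)
    (hy : 0 < y) (hy2 : y ≤ 1/2) (hxs : x^2 ≤ s*y/2) :
    6*x + (12*Real.sqrt 2*x + y)^2/2 ≤ 12*x + y/2 := by
  set u := Real.sqrt x with hu_def
  set v := Real.sqrt y with hv_def
  set w := Real.sqrt 2 with hw_def
  set w3 := Real.sqrt 3 with hw3_def
  have hu : u^2 = x := Real.sq_sqrt hx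
  have hv : v^2 = y := Real.sq_sqrt hy.le
  have hw : w^2 = 2 := Real.sq_sqrt (by norm_num)
  have hw3 : w3^2 = 3 := Real.sq_sqrt (by norm_num)
  have hu0 : 0 ≤ u := Real.sqrt_nonneg _
  have hv0 : 0 ≤ v := Real.sqrt_nonneg _
  have hw0 : 0 ≤ w := Real.sqrt_nonneg _
  have hw30 : 0 ≤ w3 := Real.sqrt_nonneg _
  have hsy : s*y ≤ y/576 := by nlinarith [mul_lt_mul_of_pos_right hs1 hy]
  -- xy ≤ 1/96
  have hy3 : y^3 ≤ 1/8 := by nlinarith [sq_nonneg y]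
  have h1 : x^2*y^2 ≤ (s*y/2)*y^2 := mul_le_mul_of_nonneg_right hxs (sq_nonneg y)
  have hxy2 : (x*y)^2 ≤ 1/9216 := by
    have h2 : s*y^3 ≤ (1/576)*(1/8) := by
      calc s*y^3 ≤ (1/576)*y^3 := by
            apply mul_le_mul_of_nonneg_right hs1.le (by positivity)
        _ ≤ (1/576)*(1/8) := by linarith
    nlinarith
  have hxy : x*y ≤ 1/96 := by nlinarith [mul_nonneg hx hy.le]
  -- 12*w*(u*v) ≤ w3
  have huv0 : 0 ≤ u*v := mul_nonneg hu0 hv0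
  have huvsq : (u*v)^2 = x*y := by rw [mul_pow, hu, hv]
  have h12 : 12*w*(u*v) ≤ w3 := by
    have hsq : (12*w*(u*v))^2 ≤ w3^2 := by
      have : (12*w*(u*v))^2 = 144*w^2*(u*v)^2 := by ring
      rw [this, hw, huvsq, hw3]; linarith
    nlinarith [mul_nonneg (mul_nonneg (by norm_num : (0:ℝ) ≤ 12) hw0) huv0, hw30]
  -- AM-GM : w3*(u*v) ≤ 6*u^2 + v^2/8
  have hamgm : w3*(u*v) ≤ 6*u^2 + v^2/8 := by
    have e1 : (0:ℝ) ≤ (w*w3*u - w*v/4)^2 := sq_nonneg _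
    have e2 : (w*w3*u - w*v/4)^2
        = w^2*w3^2*u^2 - w^2*w3*(u*v)/2 + w^2*v^2/16 := by ring
    rw [hw, hw3] at e2
    rw [e2] at e1
    linarith
  -- combine
  have hmid : 12*w*x*y ≤ 6*x + y/8 := by
    have h1 : 12*w*(u*v)*(u*v) ≤ w3*(u*v) := mul_le_mul_of_nonneg_right h12 huv0
    calc 12*w*x*y = 12*w*(u*v)*(u*v) := by rw [← hu, ← hv]; ring
      _ ≤ w3*(u*v) := h1
      _ ≤ 6*u^2 + v^2/8 := hamgm
      _ = 6*x + y/8 := by rw [hu, hv]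
  have expand : (12*w*x + y)^2/2 = 72*w^2*x^2 + 12*w*x*y + y^2/2 := by ring
  rw [expand, hw]
  have hyy : y^2 ≤ y/2 := by
    have h := mul_le_mul_of_nonneg_left hy2 hy.le
    calc y^2 = y*y := sq y
      _ ≤ y*(1/2) := h
      _ = y/2 := by ring
  linarith

private lemma part1_aux
    (s : ℝ) (hs0 : 0 < s) (hs1 : s < 1 / 576)
    (f : ℕ → ℕ → ℝ) (hf : ∀ t n, 0 ≤ f t n) (hf0 : ∀ t, f t 0 = 1)
    (hbase0 : ∀ n : ℕ, 1 ≤ n → f 0 n ≤ 1)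
    (hbase1 : ∀ n : ℕ, 1 ≤ n →
      f 1 n ≤ (6 * Real.sqrt n * s + 1 / 2) ^ (2 * n))
    (hrec : ∀ t n : ℕ, 1 ≤ t → 1 ≤ n →
      f (t + 1) n ≤ ∑ k ∈ Finset.range (2 * n + 1),
        (Nat.choose (2 * n) k : ℝ) * (6 * s * Real.sqrt n) ^ k *
          (1 / 2) ^ (2 * n - k) * f t (2 * n - k)) :
    ∀ t n : ℕ, 1 ≤ n → (n : ℝ) * 2 ^ t ≤ 1 / s →
      f t n ≤ (12 * Real.sqrt n * s + 1 / 2 ^ t) ^ (2 * n) := by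
  intro t
  induction t with
  | zero =>
    intro n hn _
    have h1 : (1:ℝ) ≤ 12 * Real.sqrt n * s + 1 / 2 ^ 0 := by
      have : 0 ≤ 12 * Real.sqrt n * s := by positivity
      simp; linarith
    calc f 0 n ≤ 1 := hbase0 n hn
      _ ≤ (12 * Real.sqrt n * s + 1 / 2 ^ 0) ^ (2*n) := one_le_pow₀ h1
  | succ t IH =>
    intro n hn h
    rcases Nat.eq_zero_or_pos t with ht0 | ht1
    · subst ht0
      have hb : 6 * Real.sqrt n * s + 1/2 ≤ 12 * Real.sqrt n * s + 1 / 2 ^ 1 := by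
        have : 0 ≤ Real.sqrt n * s := by positivity
        norm_num; nlinarith
      calc f 1 n ≤ (6 * Real.sqrt n * s + 1/2) ^ (2*n) := hbase1 n hn
        _ ≤ (12 * Real.sqrt n * s + 1 / 2 ^ 1) ^ (2*n) :=
          pow_le_pow_left₀ (by positivity) hb _
    · -- inductive step, t ≥ 1
      obtain ⟨B, hB_def⟩ : ∃ B : ℝ, 6 * s * Real.sqrt n = B := ⟨_, rfl⟩
      obtain ⟨A, hA_def⟩ : ∃ A : ℝ,
          12 * Real.sqrt 2 * (Real.sqrt n * s) + 1 / 2 ^ t = A := ⟨_, rfl⟩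
      have hA0 : 0 ≤ A := by rw [← hA_def]; positivity
      have hB0 : 0 ≤ B := by rw [← hB_def]; positivity
      have h2n : ((2*n : ℕ) : ℝ) * 2 ^ t ≤ 1 / s := by
        push_cast
        calc (2:ℝ) * n * 2 ^ t = n * 2 ^ (t+1) := by ring
          _ ≤ 1 / s := h
      -- termwise bound on f t m for m ≤ 2n
      have hfm : ∀ m : ℕ, m ≤ 2*n → f t m ≤ (A^2) ^ m := by
        intro m hm
        rcases Nat.eq_zero_or_pos m with hm0 | hm1
        · subst hm0; rw [hf0]; simp
        · have hmr : (m:ℝ) * 2 ^ t ≤ 1 / s := by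
            refine le_trans ?_ h2n
            have : (m:ℝ) ≤ ((2*n:ℕ):ℝ) := by exact_mod_cast hm
            apply mul_le_mul_of_nonneg_right this (by positivity)
          have h1 := IH m hm1 hmr
          have hsm : Real.sqrt m ≤ Real.sqrt 2 * Real.sqrt n := by
            rw [← Real.sqrt_mul (by norm_num) (n:ℝ)]
            apply Real.sqrt_le_sqrt
            exact_mod_cast hm
          have hbase : 12 * Real.sqrt m * s + 1 / 2 ^ t ≤ A := by
            rw [← hA_def]
            have : 12 * Real.sqrt m * s ≤ 12 * Real.sqrt 2 * (Real.sqrt n * s) := by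
              nlinarith [hs0.le, Real.sqrt_nonneg (m:ℝ)]
            linarith
          calc f t m ≤ (12 * Real.sqrt m * s + 1 / 2 ^ t) ^ (2*m) := h1
            _ ≤ A ^ (2*m) := pow_le_pow_left₀ (by positivity) hbase _
            _ = (A^2) ^ m := by rw [← pow_mul]
      -- termwise sum bound
      have hsum : (∑ k ∈ Finset.range (2 * n + 1),
            (Nat.choose (2 * n) k : ℝ) * B ^ k *
              (1 / 2) ^ (2 * n - k) * f t (2 * n - k))
          ≤ ∑ k ∈ Finset.range (2 * n + 1),
            B ^ k * ((1/2) * A^2) ^ (2 * n - k) * (Nat.choose (2 * n) k : ℝ) := by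
        apply Finset.sum_le_sum
        intro k _
        have hfk := hfm (2*n - k) (Nat.sub_le _ _)
        calc (Nat.choose (2 * n) k : ℝ) * B ^ k * (1 / 2) ^ (2 * n - k) * f t (2 * n - k)
            ≤ (Nat.choose (2 * n) k : ℝ) * B ^ k * (1 / 2) ^ (2 * n - k) * (A^2) ^ (2*n-k) := by
              apply mul_le_mul_of_nonneg_left hfk (by positivity)
          _ = B ^ k * ((1/2) * A^2) ^ (2 * n - k) * (Nat.choose (2 * n) k : ℝ) := by
              rw [mul_pow]; ring
      have hbinom : (∑ k ∈ Finset.range (2 * n + 1),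
            B ^ k * ((1/2) * A^2) ^ (2 * n - k) * (Nat.choose (2 * n) k : ℝ))
          = (B + (1/2) * A^2) ^ (2*n) := (add_pow B ((1/2)*A^2) (2*n)).symm
      -- scalar inequality
      have hns : (n:ℝ) * s ≤ 1 / 2 ^ (t+1) := by
        rw [le_div_iff₀ (by positivity)]
        have h2 := mul_le_mul_of_nonneg_right h hs0.le
        rw [one_div_mul_cancel hs0.ne'] at h2
        linarith [h2]
      have hxs : (Real.sqrt n * s)^2 ≤ s * (1 / 2 ^ t) / 2 := by
        rw [mul_pow, Real.sq_sqrt (by positivity : (0:ℝ) ≤ (n:ℝ))]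
        have hns2 := mul_le_mul_of_nonneg_right hns hs0.le
        have e : (1:ℝ) / 2 ^ (t+1) * s = s * (1/2^t) / 2 := by
          rw [pow_succ]; ring
        calc (n:ℝ) * s ^ 2 = (n:ℝ) * s * s := by ring
          _ ≤ 1 / 2 ^ (t+1) * s := hns2
          _ = s * (1/2^t) / 2 := e
      have hy2 : (1:ℝ) / 2 ^ t ≤ 1/2 := by
        apply div_le_div_of_nonneg_left (by norm_num) (by norm_num)
        calc (2:ℝ) = 2^1 := (pow_one 2).symm
          _ ≤ 2^t := pow_le_pow_right₀ (by norm_num) ht1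
      have hkey := key_ineq s (Real.sqrt n * s) (1 / 2 ^ t) hs0
        (by linarith [hs1]) (by positivity) (by positivity) hy2 hxs
      have hfinal : B + (1/2) * A^2 ≤ 12 * Real.sqrt n * s + 1 / 2 ^ (t+1) := by
        have e : (1:ℝ) / 2 ^ (t+1) = (1 / 2 ^ t)/2 := by rw [pow_succ]; ring
        rw [← hB_def, ← hA_def, e]
        linarith [hkey]
      have hrec' := hrec t n ht1 hn
      rw [hB_def] at hrec'
      calc f (t+1) n ≤ _ := hrec'
        _ ≤ _ := hsum
        _ = (B + (1/2) * A^2) ^ (2*n) := hbinom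
        _ ≤ (12 * Real.sqrt n * s + 1 / 2 ^ (t+1)) ^ (2*n) :=
          pow_le_pow_left₀ (by positivity) hfinal _




/-- **Moment-recursion induction for empirical DPO.**
Given the binomial moment recursion for `f(t,n)` (the maximal `2n`-th moment
at iteration `t`) with noise scale `s ∈ (0, 1/576)`, one has
`f(t,n) ≤ (12√n·s + 2^{-t})^{2n}` whenever `n·2^t ≤ 1/s`; in particular, for
`T = ⌊log₂(1/s)⌋`, `√(f(T,1)) ≤ 12s + 2^{-T} < 14s`. -/
theorem moment_recursion_induction
    (s : ℝ) (hs0 : 0 < s) (hs1 : s < 1 / 576)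
    (f : ℕ → ℕ → ℝ) (hf : ∀ t n, 0 ≤ f t n) (hf0 : ∀ t, f t 0 = 1)
    (hbase0 : ∀ n : ℕ, 1 ≤ n → f 0 n ≤ 1)
    (hbase1 : ∀ n : ℕ, 1 ≤ n →
      f 1 n ≤ (6 * Real.sqrt n * s + 1 / 2) ^ (2 * n))
    (hrec : ∀ t n : ℕ, 1 ≤ t → 1 ≤ n →
      f (t + 1) n ≤ ∑ k ∈ Finset.range (2 * n + 1),
        (Nat.choose (2 * n) k : ℝ) * (6 * s * Real.sqrt n) ^ k *
          (1 / 2) ^ (2 * n - k) * f t (2 * n - k)) :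
    (∀ n t : ℕ, 1 ≤ n → (n : ℝ) * 2 ^ t ≤ 1 / s →
      f t n ≤ (12 * Real.sqrt n * s + 1 / 2 ^ t) ^ (2 * n))
    ∧
    (Real.sqrt (f (⌊Real.logb 2 (1 / s)⌋₊) 1) ≤
        12 * s + 1 / 2 ^ (⌊Real.logb 2 (1 / s)⌋₊) ∧
      12 * s + 1 / (2 : ℝ) ^ (⌊Real.logb 2 (1 / s)⌋₊) < 14 * s) := by
  have p1 := part1_aux s hs0 hs1 f hf hf0 hbase0 hbase1 hrec
  refine ⟨fun n t hn h => p1 t n hn h, ?_⟩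
  set T := ⌊Real.logb 2 (1 / s)⌋₊ with hT
  have hs01 : (1:ℝ) < 1/s := by
    rw [lt_div_iff₀ hs0]; nlinarith
  have hlog0 : 0 ≤ Real.logb 2 (1/s) := Real.logb_nonneg (by norm_num) hs01.le
  constructor
  · -- first part
    have h2T : (2:ℝ) ^ (T:ℕ) ≤ 1 / s := by
      have e : (2:ℝ) ^ (T:ℕ) = (2:ℝ) ^ ((T:ℕ):ℝ) := (Real.rpow_natCast 2 T).symm
      rw [e]
      calc (2:ℝ) ^ ((T:ℕ):ℝ) ≤ (2:ℝ) ^ (Real.logb 2 (1/s)) :=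
            Real.rpow_le_rpow_of_exponent_le (by norm_num) (Nat.floor_le hlog0)
        _ = 1/s := Real.rpow_logb (by norm_num) (by norm_num) (by positivity)
    have hb := p1 T 1 le_rfl (by push_cast; linarith)
    rw [Nat.cast_one, Real.sqrt_one, mul_one] at hb
    have hb2 : f T 1 ≤ (12 * s + 1 / 2 ^ T) ^ 2 := by
      convert hb using 2
    calc Real.sqrt (f T 1) ≤ Real.sqrt ((12 * s + 1 / 2 ^ T) ^ 2) :=
          Real.sqrt_le_sqrt hb2
      _ = 12 * s + 1 / 2 ^ T := Real.sqrt_sq (by positivity)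
  · -- strict part
    have hlt : Real.logb 2 (1/s) - 1 < (T:ℝ) := Nat.sub_one_lt_floor _
    have h2Tgt : 1/s/2 < (2:ℝ) ^ (T:ℕ) := by
      have e : (2:ℝ) ^ (T:ℕ) = (2:ℝ) ^ ((T:ℕ):ℝ) := (Real.rpow_natCast 2 T).symm
      rw [e]
      calc 1/s/2 = (2:ℝ) ^ (Real.logb 2 (1/s) - 1) := by
            rw [Real.rpow_sub (by norm_num), Real.rpow_logb (by norm_num) (by norm_num) (by positivity), Real.rpow_one]
        _ < (2:ℝ) ^ ((T:ℕ):ℝ) := Real.rpow_lt_rpow_of_exponent_lt (by norm_num) hlt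
    have h1 : 1 / (2:ℝ) ^ (T:ℕ) < 2 * s := by
      rw [div_lt_iff₀ (by positivity)]
      have hspos : (0:ℝ) < 1/s/2 := by positivity
      have := mul_lt_mul_of_pos_left h2Tgt (by positivity : (0:ℝ) < 2*s)
      calc (1:ℝ) = 2*s*(1/s/2) := by field_simp
        _ < 2*s*(2:ℝ)^(T:ℕ) := this
        _ = 2*s*2^T := rfl
    linarith
end
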